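/- For every m ≥ 2, if an m-testable semigroup identity u ≈ v (one satisfied by all m-testable semigroups, i.e., u and v share the same prefix of length m−1, the same suffix of length m−1, and the same set of factors of length m) has left side u = w_{m,r} = x^{m−1} t₁ x^{m−1} ⋯ t_r x^{m−1} and right side v of the form x^{e₀} t₁ x^{e₁} ⋯ t_r x^{e_r}, then v = u. -/

import Mathlib

/-! In `wmr m r` every maximal run of `x = 0` has length exactly `m - 1`, so `x^m` is not a factor
of it while every `tᵢ x^(m-1)` is. Sharing the length-`m` factors thus forces each exponent of `v`
to be `< m`; and since `tᵢ` occurs in `v` only once, followed by `x^(eᵢ)` and then a letter other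
than `x` (or the end of the word), it also forces `eᵢ ≥ m - 1` for `i ≥ 1`. The leading run `e₀`
is bounded below by the shared prefix `x^(m-1)` instead. -/

abbrev Word := List ℕ

def subst (φ : ℕ → Word) (w : Word) : Word := w.flatMap φ

inductive Deduce (S : Set (Word × Word)) : Word → Word → Prop
  | refl (w : Word) : Deduce S w w
  | symm {u v : Word} : Deduce S u v → Deduce S v u
  | trans {u v w : Word} : Deduce S u v → Deduce S v w → Deduce S u w
  | step (a b : Word) (φ : ℕ → Word) {s t : Word} (h : (s, t) ∈ S) :
      Deduce S (a ++ subst φ s ++ b) (a ++ subst φ t ++ b)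

def FM (w : Word) : Type := Option {u : Word // u <:+: w}

def fmul {w : Word} : FM w → FM w → FM w
  | some u, some v =>
      if h : (u.1 ++ v.1) <:+: w then some ⟨u.1 ++ v.1, h⟩ else none
  | _, _ => none

def fone (w : Word) : FM w := some ⟨[], List.nil_infix⟩

theorem fmul_none_left {w : Word} (a : FM w) : fmul none a = none := rfl

theorem fmul_none_right {w : Word} (a : FM w) : fmul a none = none := by
  rcases a with _ | u <;> rfl

theorem fmul_some {w : Word} (u v : {u : Word // u <:+: w}) :
    fmul (some u) (some v) =
      if h : (u.1 ++ v.1) <:+: w then some ⟨u.1 ++ v.1, h⟩ else none := rfl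

theorem fmul_assoc {w : Word} (a b c : FM w) : fmul (fmul a b) c = fmul a (fmul b c) := by
  rcases a with _ | u
  · rfl
  rcases b with _ | v
  · rfl
  rcases c with _ | t
  · simp only [fmul_some]; split_ifs <;> rfl
  rw [fmul_some, fmul_some]
  by_cases h : (u.1 ++ v.1 ++ t.1) <:+: w
  · have h1 : (u.1 ++ v.1) <:+: w := List.IsInfix.trans ⟨[], t.1, by simp⟩ h
    have h2 : (v.1 ++ t.1) <:+: w := List.IsInfix.trans ⟨u.1, [], by simp⟩ h
    rw [dif_pos h1, fmul_some, dif_pos h2, fmul_some, dif_pos h,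
      dif_pos (show (u.1 ++ (v.1 ++ t.1)) <:+: w by simpa [List.append_assoc] using h)]
    simp [List.append_assoc]
    try rfl
  · by_cases h1 : (u.1 ++ v.1) <:+: w
    · rw [dif_pos h1, fmul_some, dif_neg h]
      by_cases h2 : (v.1 ++ t.1) <:+: w
      · rw [dif_pos h2, fmul_some,
          dif_neg (fun hh => h (by simpa [List.append_assoc] using hh))]
      · rw [dif_neg h2]
        try rfl
    · rw [dif_neg h1]
      by_cases h2 : (v.1 ++ t.1) <:+: w
      · rw [dif_pos h2, fmul_some,
          dif_neg (fun hh => h1 (List.IsInfix.trans ⟨[], t.1, by simp⟩ hh))]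
        try rfl
      · rw [dif_neg h2]
        try rfl

instance (w : Word) : Monoid (FM w) where
  mul := fmul
  one := fone w
  mul_assoc := fmul_assoc
  one_mul := by
    rintro (_ | u)
    · rfl
    · show fmul (fone w) (some u) = some u
      rw [fone, fmul_some, dif_pos (by simpa using u.2)]
      simp
      try rfl
  mul_one := by
    rintro (_ | u)
    · rfl
    · show fmul (some u) (fone w) = some u
      rw [fone, fmul_some, dif_pos (by simpa using u.2)]
      simp
      try rfl

def SatId (M : Type) [Monoid M] (p : Word × Word) : Prop :=
  ∀ φ : ℕ → M, (p.1.map φ).prod = (p.2.map φ).prod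

def VSat (E : Set (Word × Word)) (p : Word × Word) : Prop :=
  ∀ (M : Type) [Monoid M], (∀ q ∈ E, SatId M q) → SatId M p

def ids0 : Set (Word × Word) :=
  {([0,1,2,0,3,1],[1,0,2,0,3,1]), ([0,2,0,1,3,1],[0,2,1,0,3,1]), ([0,2,1,3,0,1],[0,2,1,3,1,0])}

def idA (n : ℕ) : Word × Word :=
  (List.replicate n 0 ++ (List.range n).map (· + 1),
   ((List.range n).map (fun i => [i + 1, 0])).flatten)

def rigid (e₀ : ℕ) (es : List ℕ) : Word :=
  List.replicate e₀ 0 ++ ((es.zipIdx.map Prod.swap).map (fun p => (p.1 + 1) :: List.replicate p.2 0)).flatten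

def Bword (n i : ℕ) : Word := List.replicate i 0 ++ 1 :: List.replicate (n - 1 - i) 0

def wmr (m r : ℕ) : Word := rigid (m - 1) (List.replicate r (m - 1))

namespace List

variable {α : Type*}

theorem prefix_of_prefix_append_cons {z l b : List α} {c : α} (h : z <+: l ++ c :: b)
    (hc : c ∉ z) : z <+: l := by
  rcases le_or_gt z.length l.length with hle | hlt
  · exact prefix_of_prefix_length_le h (prefix_append l _) hle
  · have hlc : l ++ [c] <+: z :=
      prefix_of_prefix_length_le (by simp) h (by simpa using hlt)
    exact absurd (hlc.subset (by simp)) hc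

theorem infix_or_infix_of_infix_append_cons {z a b : List α} {c : α} (h : z <:+: a ++ c :: b)
    (hc : c ∉ z) : z <:+: a ∨ z <:+: b := by
  induction a with
  | nil =>
    rcases infix_cons_iff.1 h with hpre | hinf
    · exact .inl (by simpa using prefix_of_prefix_append_cons (l := []) hpre hc)
    · exact .inr hinf
  | cons x a ih =>
    rcases infix_cons_iff.1 h with hpre | hinf
    · exact .inl (prefix_of_prefix_append_cons hpre hc).isInfix
    · exact (ih hinf).imp_left (·.trans (suffix_cons x a).isInfix)

theorem cons_infix_append_iff_of_not_mem {c : α} {z a b : List α} (hc : c ∉ a) :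
    c :: z <:+: a ++ b ↔ c :: z <:+: b := by
  refine ⟨fun h => ?_, (·.trans (suffix_append _ _).isInfix)⟩
  induction a with
  | nil => exact h
  | cons x a ih =>
    rcases infix_cons_iff.1 h with hpre | hinf
    · exact absurd ((cons_prefix_cons.1 hpre).1 ▸ mem_cons_self) hc
    · exact ih (fun hca => hc (mem_cons_of_mem x hca)) hinf

theorem replicate_prefix_replicate_append_iff {a : α} {n e : ℕ} {l : List α}
    (hl : l.head? ≠ some a) : replicate n a <+: replicate e a ++ l ↔ n ≤ e := by
  induction n generalizing e with
  | zero => simp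
  | succ n ih =>
    cases e with
    | zero =>
      cases l with
      | nil => simp
      | cons y l =>
        simp only [Nat.le_zero, Nat.succ_ne_zero, iff_false]
        exact fun h => hl (by simp [(cons_prefix_cons.1 h).1])
    | succ e => simp [replicate_succ, cons_prefix_cons, ih]

theorem replicate_infix_replicate_iff {a : α} {n e : ℕ} :
    replicate n a <:+: replicate e a ↔ n ≤ e := by
  refine ⟨fun h => by simpa using h.length_le, fun h => IsPrefix.isInfix ?_⟩
  simpa using (replicate_prefix_replicate_append_iff (l := []) (a := a) (by simp)).2 h

end List

open List

def rigidBlocks : ℕ → List ℕ → Word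
  | _, [] => []
  | k, e :: es => k :: (replicate e 0 ++ rigidBlocks (k + 1) es)

theorem flatten_zipIdx_eq_rigidBlocks (k : ℕ) (es : List ℕ) :
    (((es.zipIdx k).map Prod.swap).map (fun p => (p.1 + 1) :: replicate p.2 0)).flatten =
      rigidBlocks (k + 1) es := by
  induction es generalizing k with
  | nil => rfl
  | cons e es ih =>
    simp only [zipIdx_cons, map_cons, flatten_cons, Prod.swap, rigidBlocks, ih, cons_append]

theorem rigid_eq_replicate_append (e₀ : ℕ) (es : List ℕ) :
    rigid e₀ es = replicate e₀ 0 ++ rigidBlocks 1 es := by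
  rw [rigid, ← flatten_zipIdx_eq_rigidBlocks]

theorem head?_rigidBlocks_ne {k : ℕ} (hk : k ≠ 0) (es : List ℕ) :
    (rigidBlocks k es).head? ≠ some 0 := by
  cases es <;> simp [rigidBlocks, hk]

theorem replicate_infix_replicate_append_rigidBlocks_iff {k : ℕ} (hk : k ≠ 0) (n e : ℕ)
    (es : List ℕ) :
    replicate n 0 <:+: replicate e 0 ++ rigidBlocks k es ↔ n ≤ e ∨ ∃ x ∈ es, n ≤ x := by
  induction es generalizing k e with
  | nil => simp [rigidBlocks, replicate_infix_replicate_iff]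
  | cons x es ih =>
    have hkn : k ∉ replicate n 0 := by simp [mem_replicate, hk]
    rw [rigidBlocks]
    constructor
    · intro h
      rcases infix_or_infix_of_infix_append_cons h hkn with h | h
      · exact .inl (replicate_infix_replicate_iff.1 h)
      · simpa [or_assoc] using .inr ((ih k.succ_ne_zero x).1 h)
    · rintro (h | ⟨y, hy, hny⟩)
      · exact (replicate_infix_replicate_iff.2 h).trans (infix_append [] _ _)
      · refine ((ih k.succ_ne_zero x).2 ?_).trans ((suffix_cons k _).trans (suffix_append _ _)).isInfix
        rcases mem_cons.1 hy with rfl | hy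
        exacts [.inl hny, .inr ⟨y, hy, hny⟩]

theorem cons_replicate_infix_rigidBlocks_iff {c : ℕ} (hc : c ≠ 0) (n k : ℕ) (es : List ℕ) :
    c :: replicate n 0 <:+: rigidBlocks k es ↔
      ∃ i, ∃ hi : i < es.length, c = k + i ∧ n ≤ es[i] := by
  induction es generalizing k with
  | nil => simp [rigidBlocks]
  | cons x es ih =>
    have hc' : c ∉ replicate x 0 := by simp [mem_replicate, hc]
    rw [rigidBlocks, infix_cons_iff, cons_prefix_cons, cons_infix_append_iff_of_not_mem hc', ih,
      replicate_prefix_replicate_append_iff (head?_rigidBlocks_ne k.succ_ne_zero es)]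
    constructor
    · rintro (⟨rfl, hn⟩ | ⟨i, hi, rfl, hn⟩)
      · exact ⟨0, by simp, by simp, hn⟩
      · exact ⟨i + 1, by simpa using hi, by omega, hn⟩
    · rintro ⟨_ | i, hi, rfl, hn⟩
      · exact .inl ⟨rfl, hn⟩
      · exact .inr ⟨i, by simpa using hi, by omega, hn⟩

section Rigid

variable {e₀ : ℕ} {es : List ℕ}

theorem replicate_prefix_rigid_iff {n : ℕ} : replicate n 0 <+: rigid e₀ es ↔ n ≤ e₀ := by
  rw [rigid_eq_replicate_append,
    replicate_prefix_replicate_append_iff (head?_rigidBlocks_ne one_ne_zero es)]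

theorem replicate_infix_rigid_iff {n : ℕ} :
    replicate n 0 <:+: rigid e₀ es ↔ n ≤ e₀ ∨ ∃ e ∈ es, n ≤ e := by
  rw [rigid_eq_replicate_append, replicate_infix_replicate_append_rigidBlocks_iff one_ne_zero]

theorem succ_cons_replicate_infix_rigid_iff {i n : ℕ} :
    (i + 1) :: replicate n 0 <:+: rigid e₀ es ↔ ∃ hi : i < es.length, n ≤ es[i] := by
  have hi : i + 1 ∉ replicate e₀ 0 := by simp [mem_replicate]
  rw [rigid_eq_replicate_append, cons_infix_append_iff_of_not_mem hi,
    cons_replicate_infix_rigidBlocks_iff i.succ_ne_zero]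
  constructor
  · rintro ⟨j, hj, hij, hn⟩
    obtain rfl : j = i := by omega
    exact ⟨hj, hn⟩
  · rintro ⟨hi, hn⟩
    exact ⟨i, hi, by omega, hn⟩

end Rigid

theorem take_wmr (m r : ℕ) : (wmr m r).take (m - 1) = replicate (m - 1) 0 := by
  have h : replicate (m - 1) 0 <+: wmr m r := replicate_prefix_rigid_iff.2 le_rfl
  simpa using (prefix_iff_eq_take.1 h).symm

theorem not_replicate_infix_wmr {m : ℕ} (hm : m ≠ 0) (r : ℕ) : ¬ replicate m 0 <:+: wmr m r := by
  rw [wmr, replicate_infix_rigid_iff]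
  simp only [mem_replicate]
  omega

theorem succ_cons_replicate_infix_wmr (m : ℕ) {r i : ℕ} (hi : i < r) :
    (i + 1) :: replicate (m - 1) 0 <:+: wmr m r :=
  succ_cons_replicate_infix_rigid_iff.2 ⟨by simpa using hi, by simp⟩

theorem stmt15_general (m r : ℕ) (hm : 2 ≤ m) (e₀ : ℕ) (es : List ℕ)
    (hlen : es.length = r)
    (hpre : (rigid e₀ es).take (m - 1) = (wmr m r).take (m - 1))
    (hfac : ∀ f : Word, f.length = m → ((f <:+: rigid e₀ es) ↔ (f <:+: wmr m r))) :
    rigid e₀ es = wmr m r := by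
  have runs_lt : e₀ < m ∧ ∀ e ∈ es, e < m := by
    have h := mt (hfac _ length_replicate).1 (not_replicate_infix_wmr (by omega) r)
    simpa [replicate_infix_rigid_iff] using h
  have he₀ : m - 1 ≤ e₀ :=
    replicate_prefix_rigid_iff.1 (prefix_iff_eq_take.2 (by rw [length_replicate, hpre, take_wmr]))
  have hes : ∀ i (hi : i < es.length), m - 1 ≤ es[i] := fun i hi =>
    (succ_cons_replicate_infix_rigid_iff.1 ((hfac _ (by rw [length_cons, length_replicate]; omega)).2
      (succ_cons_replicate_infix_wmr m (hlen ▸ hi)))).2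
  have hes_eq : es = replicate r (m - 1) := by
    refine eq_replicate_iff.2 ⟨hlen, fun e he => ?_⟩
    obtain ⟨i, hi, rfl⟩ := mem_iff_getElem.1 he
    have := runs_lt.2 _ he
    have := hes i hi
    omega
  rw [wmr, hes_eq, show e₀ = m - 1 by omega]

/-- For `m ≥ 2`, if a word `v = x^{e₀} t₁ x^{e₁} ⋯ t_r x^{e_r}` has the
same length-`(m-1)` prefix, the same length-`(m-1)` suffix, and the same set of
length-`m` factors as `u = w_{m,r} = x^{m-1} t₁ x^{m-1} ⋯ t_r x^{m-1}`, then `v = u`. -/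
theorem stmt15 (m r : ℕ) (hm : 2 ≤ m) (hr : 1 ≤ r) (e₀ : ℕ) (es : List ℕ)
    (hlen : es.length = r)
    (hpre : (rigid e₀ es).take (m - 1) = (wmr m r).take (m - 1))
    (hsuf : (rigid e₀ es).reverse.take (m - 1) = (wmr m r).reverse.take (m - 1))
    (hfac : ∀ f : Word, f.length = m → ((f <:+: rigid e₀ es) ↔ (f <:+: wmr m r))) :
    rigid e₀ es = wmr m r :=
  stmt15_general m r hm e₀ es hlen hpre hfac
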